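/- Let f : ℝⁿ → ℝⁿ be C¹ with f(ξ) = 0, f'(ξ) invertible, and let Φ(x) = x − A(x) f(x) with A continuous at ξ and lim_{x→ξ} A(x) = (f'(ξ))⁻¹. Then for every ε > 0 there is δ > 0 such that ‖Φ(x) − ξ‖ ≤ ε‖x − ξ‖ for all x ∈ B(ξ, δ); i.e., the iteration is locally superlinearly contracting at ξ. -/
import Mathlib


open Metric

theorem superlinear_contraction_at_fixed_point {n : ℕ}
    (f : (Fin n → ℝ) → (Fin n → ℝ)) (ξ : Fin n → ℝ)
    (f' : (Fin n → ℝ) ≃L[ℝ] (Fin n → ℝ))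
    (A : (Fin n → ℝ) → ((Fin n → ℝ) →L[ℝ] (Fin n → ℝ)))
    (hC1 : ContDiff ℝ 1 f)
    (hfξ : f ξ = 0)
    (hf' : HasFDerivAt f (f' : (Fin n → ℝ) →L[ℝ] (Fin n → ℝ)) ξ)
    (hA : ContinuousAt A ξ)
    (hAξ : A ξ = (f'.symm : (Fin n → ℝ) →L[ℝ] (Fin n → ℝ))) :
    ∀ ε > 0, ∃ δ > 0, ∀ x ∈ ball ξ δ,
      ‖(x - A x (f x)) - ξ‖ ≤ ε * ‖x - ξ‖ := by
  intro ε hε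
  set L := (f' : (Fin n → ℝ) →L[ℝ] (Fin n → ℝ)) with hL
  set Li := (f'.symm : (Fin n → ℝ) →L[ℝ] (Fin n → ℝ)) with hLi
  have hden : (0:ℝ) < ‖L‖ + ‖Li‖ + 1 := by positivity
  set η := min 1 (ε / (‖L‖ + ‖Li‖ + 1)) with hη
  have hηpos : 0 < η := lt_min one_pos (div_pos hε hden)
  have h1 : ∀ᶠ x in nhds ξ, ‖f x - L (x - ξ)‖ ≤ η * ‖x - ξ‖ := by
    have := (hf'.isLittleO.def hηpos)
    filter_upwards [this] with x hx
    simpa [hfξ] using hx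
  have h2 : ∀ᶠ x in nhds ξ, ‖A x - Li‖ ≤ η := by
    have : ∀ᶠ x in nhds ξ, A x ∈ Metric.closedBall (A ξ) η :=
      hA (Metric.closedBall_mem_nhds _ hηpos)
    filter_upwards [this] with x hx
    simpa [hAξ, dist_eq_norm] using hx
  obtain ⟨δ, hδ, hball⟩ := Metric.eventually_nhds_iff_ball.mp (h1.and h2)
  refine ⟨δ, hδ, fun x hx => ?_⟩
  obtain ⟨hx1, hx2⟩ := hball x hx
  have hLiL : Li (L (x - ξ)) = x - ξ := f'.symm_apply_apply (x - ξ)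
  have key : (x - A x (f x)) - ξ
      = -((A x - Li) (L (x - ξ))) - A x (f x - L (x - ξ)) := by
    have h0 : -((A x - Li) (L (x - ξ))) - A x (f x - L (x - ξ))
        = Li (L (x - ξ)) - A x (f x) := by
      rw [ContinuousLinearMap.sub_apply, map_sub (A x) (f x) (L (x - ξ))]
      abel
    rw [h0, hLiL]
    abel
  rw [key]
  have b1 : ‖(A x - Li) (L (x - ξ))‖ ≤ η * (‖L‖ * ‖x - ξ‖) :=
    le_trans ((A x - Li).le_opNorm _)
      (by
        have := (L.le_opNorm (x - ξ))
        calc ‖A x - Li‖ * ‖L (x - ξ)‖ ≤ η * ‖L (x - ξ)‖ :=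
              mul_le_mul_of_nonneg_right hx2 (norm_nonneg _)
          _ ≤ η * (‖L‖ * ‖x - ξ‖) :=
              mul_le_mul_of_nonneg_left this hηpos.le)
  have hAxnorm : ‖A x‖ ≤ ‖Li‖ + 1 := by
    have : ‖A x‖ ≤ ‖A x - Li‖ + ‖Li‖ := by
      calc ‖A x‖ = ‖(A x - Li) + Li‖ := by rw [sub_add_cancel]
        _ ≤ ‖A x - Li‖ + ‖Li‖ := norm_add_le _ _
    have hη1 : η ≤ 1 := min_le_left _ _
    linarith
  have b2 : ‖A x (f x - L (x - ξ))‖ ≤ (‖Li‖ + 1) * (η * ‖x - ξ‖) :=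
    le_trans ((A x).le_opNorm _)
      (mul_le_mul hAxnorm hx1 (norm_nonneg _) (by positivity))
  calc ‖-((A x - Li) (L (x - ξ))) - A x (f x - L (x - ξ))‖
      ≤ ‖(A x - Li) (L (x - ξ))‖ + ‖A x (f x - L (x - ξ))‖ := by
        have h := norm_sub_le (-((A x - Li) (L (x - ξ)))) (A x (f x - L (x - ξ)))
        rwa [norm_neg] at h
    _ ≤ η * (‖L‖ * ‖x - ξ‖) + (‖Li‖ + 1) * (η * ‖x - ξ‖) := add_le_add b1 b2
    _ = η * (‖L‖ + ‖Li‖ + 1) * ‖x - ξ‖ := by ring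
    _ ≤ ε * ‖x - ξ‖ := by
        apply mul_le_mul_of_nonneg_right _ (norm_nonneg _)
        have : η ≤ ε / (‖L‖ + ‖Li‖ + 1) := min_le_right _ _
        calc η * (‖L‖ + ‖Li‖ + 1) ≤ (ε / (‖L‖ + ‖Li‖ + 1)) * (‖L‖ + ‖Li‖ + 1) :=
              mul_le_mul_of_nonneg_right this hden.le
          _ = ε := div_mul_cancel₀ _ hden.ne'
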